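/- arXiv:2003.02496 — 2 statements merged into one kernel-verified Lean document; each statement's English description precedes it below -/
import Mathlib

section
/- There exists a group homomorphism Φ from the braid group B_n to the automorphism group Aut(E) such that Φ(σ_i) equals the automorphism β̃_i for each i = 1, …, n−1. -/
/-!
Each `β̃_i` has the explicit inverse `e_{i−1,j} ↦ e_{i−1,j}·e_{i,j}`, `e_{i,j} ↦ e_{i,j−1}⁻¹`,
`e_{i+1,j} ↦ e_{i,j−1}·e_{i+1,j}`, so it is an automorphism of `E`. The braid relations among
the `β̃_i` need only be checked on the generators `e_{k,j}`, and since `β̃_i` fixes `e_{k,j}`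
unless `|k − i| ≤ 1`, only finitely many positions of `k` relative to the indices involved
remain, each a short computation. The universal property of the presentation
of `B_n` then yields `Φ`.
-/

/-- The free group `E` on the generators `e_{k,j}`, `k = 0,1,…,n`, `j ∈ ℤ/dℤ`,
of the covering groupoid of the `d`-fold branched cover over a disk with `n`
branch points. -/
abbrev Egrp (n d : ℕ) : Type := FreeGroup (Fin (n + 1) × ZMod d)

/-- The generator `e_{k,j}` of `E` (first index read as a natural number). -/
def eGen (n d : ℕ) (k : ℕ) (j : ZMod d) : Egrp n d :=
  FreeGroup.of ((Fin.ofNat (n + 1) k), j)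

/-- The lift `β̃_i` of the half Dehn twist `β_i`, as an endomorphism of the
free group `E`, defined on generators by
`e_{i−1,j} ↦ e_{i−1,j}·e_{i,j+1}`, `e_{i,j} ↦ e_{i,j+1}⁻¹`,
`e_{i+1,j} ↦ e_{i,j}·e_{i+1,j}`, and fixing all other generators. -/
def betaTilde (n d : ℕ) (i : ℕ) : Egrp n d →* Egrp n d :=
  FreeGroup.lift fun p =>
    if (p.1 : ℕ) + 1 = i then
      FreeGroup.of p * eGen n d i (p.2 + 1)
    else if (p.1 : ℕ) = i then
      (FreeGroup.of (p.1, p.2 + 1))⁻¹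
    else if (p.1 : ℕ) = i + 1 then
      eGen n d i p.2 * FreeGroup.of p
    else
      FreeGroup.of p

/-- The braid relations on the generators `σ_1, …, σ_m` (indexed by `Fin m`,
where the generator of index `a` is `σ_{a+1}`): `σ_aσ_bσ_a = σ_bσ_aσ_b` for
adjacent indices and `σ_aσ_b = σ_bσ_a` for far apart indices. -/
def braidRels (m : ℕ) : Set (FreeGroup (Fin m)) :=
  {r | (∃ a b : Fin m, (a : ℕ) + 1 = (b : ℕ) ∧
          r = FreeGroup.of a * FreeGroup.of b * FreeGroup.of a *
                (FreeGroup.of b * FreeGroup.of a * FreeGroup.of b)⁻¹) ∨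
       (∃ a b : Fin m, (a : ℕ) + 2 ≤ (b : ℕ) ∧
          r = FreeGroup.of a * FreeGroup.of b * (FreeGroup.of b * FreeGroup.of a)⁻¹)}

/-- The braid group `B_n` on `n` strands, presented with generators
`σ_1, …, σ_{n−1}` and the braid relations. -/
abbrev BraidGroup (n : ℕ) : Type := PresentedGroup (braidRels (n - 1))

lemma lift_eq_one_of_mem_braidRels {m : ℕ} {G : Type*} [Group G] (f : Fin m → G)
    (h_adj : ∀ a b : Fin m, (a : ℕ) + 1 = b → f a * f b * f a = f b * f a * f b)
    (h_far : ∀ a b : Fin m, (a : ℕ) + 2 ≤ b → f a * f b = f b * f a) :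
    ∀ r ∈ braidRels m, FreeGroup.lift f r = 1 := by
  rintro r (⟨a, b, hab, rfl⟩ | ⟨a, b, hab, rfl⟩) <;>
    simp only [map_mul, map_inv, FreeGroup.lift_apply_of, mul_inv_eq_one]
  exacts [h_adj a b hab, h_far a b hab]

section

variable {n d : ℕ}

lemma of_eq_eGen (p : Fin (n + 1) × ZMod d) : FreeGroup.of p = eGen n d p.1 p.2 := by
  rw [eGen, Fin.ofNat_val_eq_self]

lemma Egrp.hom_ext {G : Type*} [Group G] {f g : Egrp n d →* G}
    (h : ∀ k ≤ n, ∀ j, f (eGen n d k j) = g (eGen n d k j)) : f = g :=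
  FreeGroup.ext_hom _ _ fun p => by
    rw [of_eq_eGen]
    exact h _ (Nat.lt_succ_iff.mp p.1.isLt) _

end

def betaTildeInv (n d i : ℕ) : Egrp n d →* Egrp n d :=
  FreeGroup.lift fun p =>
    if (p.1 : ℕ) + 1 = i then
      FreeGroup.of p * eGen n d i p.2
    else if (p.1 : ℕ) = i then
      (eGen n d i (p.2 - 1))⁻¹
    else if (p.1 : ℕ) = i + 1 then
      eGen n d i (p.2 - 1) * FreeGroup.of p
    else
      FreeGroup.of p

section

variable {n d i k : ℕ}

lemma betaTilde_eGen (hk : k ≤ n) (j : ZMod d) :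
    betaTilde n d i (eGen n d k j) =
      if k + 1 = i then eGen n d k j * eGen n d i (j + 1)
      else if k = i then (eGen n d k (j + 1))⁻¹
      else if k = i + 1 then eGen n d i j * eGen n d k j
      else eGen n d k j := by
  simp only [betaTilde, eGen, FreeGroup.lift_apply_of, Fin.val_ofNat,
    Nat.mod_eq_of_lt (Nat.lt_succ_of_le hk)]

lemma betaTildeInv_eGen (hk : k ≤ n) (j : ZMod d) :
    betaTildeInv n d i (eGen n d k j) =
      if k + 1 = i then eGen n d k j * eGen n d i j
      else if k = i then (eGen n d i (j - 1))⁻¹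
      else if k = i + 1 then eGen n d i (j - 1) * eGen n d k j
      else eGen n d k j := by
  simp only [betaTildeInv, eGen, FreeGroup.lift_apply_of, Fin.val_ofNat,
    Nat.mod_eq_of_lt (Nat.lt_succ_of_le hk)]

lemma betaTilde_eGen_pred (hk : k ≤ n) (j : ZMod d) :
    betaTilde n d (k + 1) (eGen n d k j) = eGen n d k j * eGen n d (k + 1) (j + 1) := by
  rw [betaTilde_eGen hk, if_pos rfl]

lemma betaTilde_eGen_self (hi : i ≤ n) (j : ZMod d) :
    betaTilde n d i (eGen n d i j) = (eGen n d i (j + 1))⁻¹ := by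
  rw [betaTilde_eGen hi, if_neg (by omega), if_pos rfl]

lemma betaTilde_eGen_succ (hi : i + 1 ≤ n) (j : ZMod d) :
    betaTilde n d i (eGen n d (i + 1) j) = eGen n d i j * eGen n d (i + 1) j := by
  rw [betaTilde_eGen hi, if_neg (by omega), if_neg (by omega), if_pos rfl]

lemma betaTilde_eGen_of_ne (hk : k ≤ n) (h₁ : k + 1 ≠ i) (h₂ : k ≠ i) (h₃ : k ≠ i + 1)
    (j : ZMod d) : betaTilde n d i (eGen n d k j) = eGen n d k j := by
  rw [betaTilde_eGen hk, if_neg h₁, if_neg h₂, if_neg h₃]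

lemma betaTildeInv_eGen_pred (hk : k ≤ n) (j : ZMod d) :
    betaTildeInv n d (k + 1) (eGen n d k j) = eGen n d k j * eGen n d (k + 1) j := by
  rw [betaTildeInv_eGen hk, if_pos rfl]

lemma betaTildeInv_eGen_self (hi : i ≤ n) (j : ZMod d) :
    betaTildeInv n d i (eGen n d i j) = (eGen n d i (j - 1))⁻¹ := by
  rw [betaTildeInv_eGen hi, if_neg (by omega), if_pos rfl]

lemma betaTildeInv_eGen_succ (hi : i + 1 ≤ n) (j : ZMod d) :
    betaTildeInv n d i (eGen n d (i + 1) j) = eGen n d i (j - 1) * eGen n d (i + 1) j := by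
  rw [betaTildeInv_eGen hi, if_neg (by omega), if_neg (by omega), if_pos rfl]

lemma betaTildeInv_eGen_of_ne (hk : k ≤ n) (h₁ : k + 1 ≠ i) (h₂ : k ≠ i) (h₃ : k ≠ i + 1)
    (j : ZMod d) : betaTildeInv n d i (eGen n d k j) = eGen n d k j := by
  rw [betaTildeInv_eGen hk, if_neg h₁, if_neg h₂, if_neg h₃]

end

section

variable {n d i : ℕ}

lemma betaTildeInv_comp_betaTilde (hi : i ≤ n) :
    (betaTildeInv n d i).comp (betaTilde n d i) = MonoidHom.id _ := by
  refine Egrp.hom_ext fun k hk j => ?_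
  rcases (by omega : k + 1 = i ∨ k = i ∨ k = i + 1 ∨ (k + 1 ≠ i ∧ k ≠ i ∧ k ≠ i + 1))
    with rfl | rfl | rfl | ⟨_, _, _⟩
  all_goals simp (disch := omega) [betaTilde_eGen_pred, betaTilde_eGen_self,
    betaTilde_eGen_succ, betaTilde_eGen_of_ne, betaTildeInv_eGen_pred, betaTildeInv_eGen_self,
    betaTildeInv_eGen_succ, betaTildeInv_eGen_of_ne]

lemma betaTilde_comp_betaTildeInv (hi : i ≤ n) :
    (betaTilde n d i).comp (betaTildeInv n d i) = MonoidHom.id _ := by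
  refine Egrp.hom_ext fun k hk j => ?_
  rcases (by omega : k + 1 = i ∨ k = i ∨ k = i + 1 ∨ (k + 1 ≠ i ∧ k ≠ i ∧ k ≠ i + 1))
    with rfl | rfl | rfl | ⟨_, _, _⟩
  all_goals simp (disch := omega) [betaTilde_eGen_pred, betaTilde_eGen_self,
    betaTilde_eGen_succ, betaTilde_eGen_of_ne, betaTildeInv_eGen_pred, betaTildeInv_eGen_self,
    betaTildeInv_eGen_succ, betaTildeInv_eGen_of_ne]

lemma betaTilde_braid (hi : i + 1 ≤ n) :
    (betaTilde n d i).comp ((betaTilde n d (i + 1)).comp (betaTilde n d i)) =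
      (betaTilde n d (i + 1)).comp ((betaTilde n d i).comp (betaTilde n d (i + 1))) := by
  refine Egrp.hom_ext fun k hk j => ?_
  rcases (by omega : k + 1 = i ∨ k = i ∨ k = i + 1 ∨ k = i + 2 ∨
      (k + 1 ≠ i ∧ k ≠ i ∧ k ≠ i + 1 ∧ k ≠ i + 2)) with rfl | rfl | rfl | rfl | ⟨_, _, _, _⟩
  all_goals simp (disch := omega) [betaTilde_eGen_pred, betaTilde_eGen_self,
    betaTilde_eGen_succ, betaTilde_eGen_of_ne, mul_assoc]

lemma betaTilde_comm {i' : ℕ} (hii' : i + 2 ≤ i') (hi' : i' ≤ n) :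
    (betaTilde n d i).comp (betaTilde n d i') = (betaTilde n d i').comp (betaTilde n d i) := by
  refine Egrp.hom_ext fun k hk j => ?_
  rcases (by omega : k + 1 = i ∨ k = i ∨ (k = i + 1 ∧ i' = i + 2) ∨ (k = i + 1 ∧ i' ≠ i + 2) ∨
      (k + 1 = i' ∧ k ≠ i + 1) ∨ k = i' ∨ k = i' + 1 ∨
      (k + 1 ≠ i ∧ k ≠ i ∧ k ≠ i + 1 ∧ k + 1 ≠ i' ∧ k ≠ i' ∧ k ≠ i' + 1))
    with rfl | rfl | ⟨rfl, rfl⟩ | ⟨rfl, _⟩ | ⟨rfl, _⟩ | rfl | rfl | ⟨_, _, _, _, _, _⟩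
  all_goals simp (disch := omega) [betaTilde_eGen_pred, betaTilde_eGen_self,
    betaTilde_eGen_succ, betaTilde_eGen_of_ne, mul_assoc]

end

-- For `i > n` the index of `eGen n d i` wraps around modulo `n + 1`, and `betaTilde n d i` need
-- not be invertible.
def betaAut (n d i : ℕ) (hi : i ≤ n) : MulAut (Egrp n d) :=
  (betaTilde n d i).toMulEquiv (betaTildeInv n d i)
    (betaTildeInv_comp_betaTilde hi) (betaTilde_comp_betaTildeInv hi)

section

variable {n d i i' : ℕ}

@[simp]
lemma betaAut_apply (hi : i ≤ n) (x : Egrp n d) : betaAut n d i hi x = betaTilde n d i x := rfl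

lemma betaAut_braid (hi : i ≤ n) (hii' : i + 1 = i') (hi' : i' ≤ n) :
    betaAut n d i hi * betaAut n d i' hi' * betaAut n d i hi =
      betaAut n d i' hi' * betaAut n d i hi * betaAut n d i' hi' := by
  subst hii'
  exact MulEquiv.ext fun x => DFunLike.congr_fun (betaTilde_braid hi') x

lemma betaAut_comm (hi : i ≤ n) (hii' : i + 2 ≤ i') (hi' : i' ≤ n) :
    betaAut n d i hi * betaAut n d i' hi' = betaAut n d i' hi' * betaAut n d i hi :=
  MulEquiv.ext fun x => DFunLike.congr_fun (betaTilde_comm hii' hi') x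

end

theorem exists_braid_representation_general (n d : ℕ) :
    ∃ Φ : BraidGroup n →* MulAut (Egrp n d),
      ∀ (i : ℕ), 1 ≤ i → i ≤ n - 1 → ∀ (h : i - 1 < n - 1) (x : Egrp n d),
        Φ (PresentedGroup.of (rels := braidRels (n - 1)) ⟨i - 1, h⟩) x =
          betaTilde n d i x := by
  let σ : Fin (n - 1) → MulAut (Egrp n d) := fun a => betaAut n d (a + 1) (by omega)
  have hσ : ∀ r ∈ braidRels (n - 1), FreeGroup.lift σ r = 1 :=
    lift_eq_one_of_mem_braidRels σ
      (fun a b hab => betaAut_braid _ (by omega) _)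
      (fun a b hab => betaAut_comm _ (by omega) _)
  refine ⟨PresentedGroup.toGroup hσ, fun i hi _ h x => ?_⟩
  simp only [σ, PresentedGroup.toGroup.of, betaAut_apply, Nat.sub_add_cancel hi]

/-- There is a group homomorphism `Φ : B_n → Aut(E)` sending each braid
generator `σ_i` (for `i = 1, …, n−1`) to the automorphism `β̃_i`. -/
theorem exists_braid_representation (n d : ℕ) (hn : 2 ≤ n) (hd : 2 ≤ d) :
    ∃ Φ : BraidGroup n →* MulAut (Egrp n d),
      ∀ (i : ℕ), 1 ≤ i → i ≤ n - 1 → ∀ (h : i - 1 < n - 1) (x : Egrp n d),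
        Φ (PresentedGroup.of (rels := braidRels (n - 1)) ⟨i - 1, h⟩) x =
          betaTilde n d i x :=
  exists_braid_representation_general n d
end

section
/- The endomorphisms T_i satisfy the braid relation: for each i with 1 ≤ i ≤ n−2, T_i ∘ T_{i+1} ∘ T_i = T_{i+1} ∘ T_i ∘ T_{i+1} as endomorphisms of F. -/
/-!
Put `y_{k,j} := x_{k,1} ⋯ x_{k,j-1}`, so that `x_{k,j} = y_{k,j}⁻¹ y_{k,j+1}`; it suffices to
check the braid relation on the `y`'s, on which the `T_i` act by simple formulas:
`T_i y_{i-1,j} = y_{i,2}⁻¹ y_{i,j+1} y_{i-1,j}`, `T_i y_{i,j} = y_{i,j+1}⁻¹ y_{i,2}`,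
`T_i y_{i+1,j} = y_{i+1,j} y_{i,j}`, and `T_i` fixes the other rows. These hold for `1 ≤ j ≤ d`
by induction on `j`, and then for all `j ≥ 1` because `x_{k,d} = y_{k,d}⁻¹` makes `j ↦ y_{k,j}`
`d`-periodic. The braid relation on `y_{k,j}` is then a direct computation in the free group
in each of the cases `k = i - 1, i, i + 1, i + 2` and `k` far from `i`.
-/

/-- The free group `F` on the `(d−1)(n−1)` generators `x_{i,j}`,
`i = 1,…,n−1`, `j = 1,…,d−1`. -/
abbrev Fgrp (n d : ℕ) : Type := FreeGroup (Fin (n - 1) × Fin (d - 1))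

/-- The element `x_{k,j}` of `F`, with the second index read modulo `d`:
for `j ≡ 1,…,d−1 (mod d)` it is the corresponding generator, and for
`j ≡ 0 (mod d)` (i.e. `j = d`) it is `x_{k,d} := (x_{k,1}·x_{k,2}·…·x_{k,d−1})⁻¹`.
(Junk value `1` outside the valid index ranges.) -/
def X (n d k j : ℕ) : Fgrp n d :=
  if hk : k - 1 < n - 1 then
    if j % d = 0 then
      ((List.ofFn fun b : Fin (d - 1) =>
        FreeGroup.of ((⟨k - 1, hk⟩ : Fin (n - 1)), b)).prod)⁻¹
    else if hj : j % d - 1 < d - 1 then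
      FreeGroup.of ((⟨k - 1, hk⟩ : Fin (n - 1)), (⟨j % d - 1, hj⟩ : Fin (d - 1)))
    else 1
  else 1

/-- The element `y_{k,j} := x_{k,1}·x_{k,2}·…·x_{k,j−1}` of `F`. -/
def Y (n d k j : ℕ) : Fgrp n d :=
  ((List.range (j - 1)).map fun t => X n d k (t + 1)).prod

/-- The endomorphism `T_i` of the free group `F`, defined on the generators
(with `1 ≤ k ≤ n−1`, `1 ≤ j ≤ d−1`) by
`x_{i−1,j} ↦ x_{i−1,j−1}⁻¹·…·x_{i−1,1}⁻¹·x_{i,j+1}·x_{i−1,1}·…·x_{i−1,j}`,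
`x_{i,j} ↦ x_{i,2}·…·x_{i,j}·x_{i,j+1}⁻¹·x_{i,j}⁻¹·…·x_{i,2}⁻¹`,
`x_{i+1,j} ↦ x_{i,j−1}⁻¹·…·x_{i,1}⁻¹·x_{i+1,j}·x_{i,1}·…·x_{i,j}`,
fixing all other generators. -/
def T (n d : ℕ) (i : ℕ) : Fgrp n d →* Fgrp n d :=
  FreeGroup.lift fun p =>
    let k := (p.1 : ℕ) + 1
    let j := (p.2 : ℕ) + 1
    if k + 1 = i then
      (Y n d k j)⁻¹ * X n d i (j + 1) * Y n d k (j + 1)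
    else if k = i then
      (((List.range (j - 1)).map fun t => X n d i (t + 2)).prod) *
        (X n d i (j + 1))⁻¹ *
        (((List.range (j - 1)).map fun t => X n d i (t + 2)).prod)⁻¹
    else if k = i + 1 then
      (Y n d i j)⁻¹ * X n d k j * Y n d i (j + 1)
    else
      FreeGroup.of p

section
variable {n d : ℕ}

theorem X_eq_of {k j : ℕ} (hk : k - 1 < n - 1) (hj : j + 1 < d) :
    X n d k (j + 1) = FreeGroup.of (⟨k - 1, hk⟩, ⟨j, by omega⟩) := by
  have hmod : (j + 1) % d = j + 1 := Nat.mod_eq_of_lt hj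
  simp only [X, hmod, dif_pos hk, Nat.add_one_ne_zero, if_false,
    Nat.add_sub_cancel, dif_pos (show j < d - 1 by omega)]

theorem of_eq_X (p : Fin (n - 1) × Fin (d - 1)) :
    FreeGroup.of p = X n d (p.1 + 1) (p.2 + 1) := by
  rw [X_eq_of (by omega) (by omega)]
  rfl

theorem Y_one (k : ℕ) : Y n d k 1 = 1 := by
  simp [Y]

theorem Y_add_two (k j : ℕ) : Y n d k (j + 2) = Y n d k (j + 1) * X n d k (j + 1) := by
  simp [Y, List.range_succ]

theorem X_eq_inv_Y_mul_Y (k j : ℕ) :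
    X n d k (j + 1) = (Y n d k (j + 1))⁻¹ * Y n d k (j + 2) := by
  rw [Y_add_two, inv_mul_cancel_left]

theorem X_self_eq_inv_Y (k : ℕ) : X n d k d = (Y n d k d)⁻¹ := by
  by_cases hk : k - 1 < n - 1
  · rw [X, dif_pos hk, if_pos (Nat.mod_self d), inv_inj, Y]
    congr 1
    apply List.ext_getElem (by simp)
    intro t ht _
    simp only [List.length_ofFn] at ht
    simp [X_eq_of hk (show t + 1 < d by omega)]
  · simp [X, hk, Y]

theorem X_periodic (k : ℕ) : Function.Periodic (X n d k) d := by
  intro j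
  simp [X, Nat.add_mod_right]

theorem Y_add_period (k j : ℕ) : Y n d k (j + 1 + d) = Y n d k (j + 1) := by
  induction j with
  | zero =>
    obtain _ | e := d
    · rfl
    · rw [show 0 + 1 + (e + 1) = e + 2 by omega, Y_add_two, X_self_eq_inv_Y, mul_inv_cancel,
        Y_one]
  | succ j ih =>
    rw [show j + 1 + 1 + d = j + d + 2 by omega, Y_add_two, add_right_comm, ih,
      X_periodic, Y_add_two]

@[elab_as_elim]
theorem forall_of_forall_lt_of_imp_add {P : ℕ → Prop} (hd : 0 < d) (h : ∀ j < d, P j)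
    (hP : ∀ j, P j → P (j + d)) (j : ℕ) : P j := by
  rw [← Nat.mod_add_div j d]
  induction j / d with
  | zero => exact h _ (Nat.mod_lt j hd)
  | succ q ih => rw [Nat.mul_succ, ← add_assoc]; exact hP _ ih

theorem prod_range_X_add_two (k j : ℕ) :
    ((List.range j).map fun t => X n d k (t + 2)).prod = (Y n d k 2)⁻¹ * Y n d k (j + 2) := by
  simp [Y, List.range_succ_eq_map, List.map_map, Function.comp_def]

theorem T_X_pred {k j : ℕ} (hk0 : 0 < k) (hk : k < n) (hj : j + 1 < d) :
    T n d (k + 1) (X n d k (j + 1)) =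
      (Y n d k (j + 1))⁻¹ * X n d (k + 1) (j + 2) * Y n d k (j + 2) := by
  rw [X_eq_of (by omega) hj, T, FreeGroup.lift_apply_of]
  simp [Nat.sub_add_cancel hk0]

theorem T_X_self {i j : ℕ} (hi0 : 0 < i) (hi : i < n) (hj : j + 1 < d) :
    T n d i (X n d i (j + 1)) =
      (Y n d i 2)⁻¹ * Y n d i (j + 2) * (X n d i (j + 2))⁻¹ * (Y n d i (j + 2))⁻¹ * Y n d i 2 := by
  rw [X_eq_of (by omega) hj, T, FreeGroup.lift_apply_of]
  simp [Nat.sub_add_cancel hi0, prod_range_X_add_two, mul_assoc]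

theorem T_X_succ {i j : ℕ} (hi : i + 1 < n) (hj : j + 1 < d) :
    T n d i (X n d (i + 1) (j + 1)) =
      (Y n d i (j + 1))⁻¹ * X n d (i + 1) (j + 1) * Y n d i (j + 2) := by
  rw [X_eq_of (by omega) hj, T, FreeGroup.lift_apply_of]
  simp [show i + 1 + 1 ≠ i by omega, X_eq_of (show i + 1 - 1 < n - 1 by omega) hj]

theorem T_X_eq_self {i k j : ℕ} (hk0 : 0 < k) (hk : k < n) (hj : j + 1 < d)
    (hpred : k + 1 ≠ i) (hself : k ≠ i) (hsucc : k ≠ i + 1) :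
    T n d i (X n d k (j + 1)) = X n d k (j + 1) := by
  rw [X_eq_of (by omega) hj, T, FreeGroup.lift_apply_of]
  simp [Nat.sub_add_cancel hk0, hpred, hself, hsucc]

theorem T_Y_pred {k : ℕ} (hd : 0 < d) (hk0 : 0 < k) (hk : k < n) (j : ℕ) :
    T n d (k + 1) (Y n d k (j + 1)) =
      (Y n d (k + 1) 2)⁻¹ * Y n d (k + 1) (j + 2) * Y n d k (j + 1) := by
  refine forall_of_forall_lt_of_imp_add hd (fun j hj => ?_) (fun j h => ?_) j
  · induction j with
    | zero => simp [Y_one]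
    | succ j ih =>
      rw [Y_add_two, map_mul, ih (by omega), T_X_pred hk0 hk hj, Y_add_two (k + 1) (j + 1),
        Y_add_two k j]
      group
  · simpa only [add_right_comm _ d, Y_add_period] using h

theorem T_Y_self {i : ℕ} (hd : 0 < d) (hi0 : 0 < i) (hi : i < n) (j : ℕ) :
    T n d i (Y n d i (j + 1)) = (Y n d i (j + 2))⁻¹ * Y n d i 2 := by
  refine forall_of_forall_lt_of_imp_add hd (fun j hj => ?_) (fun j h => ?_) j
  · induction j with
    | zero => simp [Y_one]
    | succ j ih =>
      rw [Y_add_two, map_mul, ih (by omega), T_X_self hi0 hi hj, Y_add_two i (j + 1)]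
      group
  · simpa only [add_right_comm _ d, Y_add_period] using h

theorem T_Y_succ {i : ℕ} (hd : 0 < d) (hi : i + 1 < n) (j : ℕ) :
    T n d i (Y n d (i + 1) (j + 1)) = Y n d (i + 1) (j + 1) * Y n d i (j + 1) := by
  refine forall_of_forall_lt_of_imp_add hd (fun j hj => ?_) (fun j h => ?_) j
  · induction j with
    | zero => simp [Y_one]
    | succ j ih =>
      rw [Y_add_two, map_mul, ih (by omega), T_X_succ hi hj, Y_add_two i j]
      group
  · simpa only [add_right_comm _ d, Y_add_period] using h

theorem T_Y_eq_self {i k : ℕ} (hd : 0 < d) (hk0 : 0 < k) (hk : k < n)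
    (hpred : k + 1 ≠ i) (hself : k ≠ i) (hsucc : k ≠ i + 1) (j : ℕ) :
    T n d i (Y n d k (j + 1)) = Y n d k (j + 1) := by
  refine forall_of_forall_lt_of_imp_add hd (fun j hj => ?_) (fun j h => ?_) j
  · induction j with
    | zero => simp [Y_one]
    | succ j ih =>
      rw [Y_add_two, map_mul, ih (by omega), T_X_eq_self hk0 hk hj hpred hself hsucc]
  · simpa only [add_right_comm _ d, Y_add_period] using h

theorem T_braid_Y {i k : ℕ} (hd : 0 < d) (hi0 : 0 < i) (hi : i + 1 < n) (hk0 : 0 < k)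
    (hk : k < n) (j : ℕ) :
    T n d i (T n d (i + 1) (T n d i (Y n d k (j + 1)))) =
      T n d (i + 1) (T n d i (T n d (i + 1) (Y n d k (j + 1)))) := by
  obtain rfl | rfl | rfl | rfl | hfar :
      k + 1 = i ∨ k = i ∨ k = i + 1 ∨ k = i + 2 ∨ (k + 1 < i ∨ i + 2 < k) := by omega
  all_goals simp (disch := omega) only [map_mul, map_inv, T_Y_pred hd, T_Y_self hd, T_Y_succ hd,
    T_Y_eq_self hd]
  all_goals group

end

theorem T_braid_relation_general (n d : ℕ) (hd : 2 ≤ d)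
    (i : ℕ) (hi1 : 1 ≤ i) (hi2 : i ≤ n - 2) :
    (T n d i).comp ((T n d (i + 1)).comp (T n d i)) =
      (T n d (i + 1)).comp ((T n d i).comp (T n d (i + 1))) := by
  ext p
  have hk : (p.1 : ℕ) + 1 < n := by omega
  simp only [MonoidHom.comp_apply, of_eq_X, X_eq_inv_Y_mul_Y, map_mul, map_inv,
    T_braid_Y (by omega : 0 < d) hi1 (by omega : i + 1 < n) (Nat.succ_pos _) hk]

/-- The endomorphisms `T_i` satisfy the braid relation: for each `i` with
`1 ≤ i ≤ n−2`, `T_i ∘ T_{i+1} ∘ T_i = T_{i+1} ∘ T_i ∘ T_{i+1}`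
as endomorphisms of `F`. -/
theorem T_braid_relation (n d : ℕ) (hn : 2 ≤ n) (hd : 2 ≤ d)
    (i : ℕ) (hi1 : 1 ≤ i) (hi2 : i ≤ n - 2) :
    (T n d i).comp ((T n d (i + 1)).comp (T n d i)) =
      (T n d (i + 1)).comp ((T n d i).comp (T n d (i + 1))) :=
  T_braid_relation_general n d hd i hi1 hi2
end
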